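/- arXiv:1902.05314 — 2 statements merged into one kernel-verified Lean document; each statement's English description precedes it below -/
import Mathlib

section
/- Let E, F ⊂ B₀ ⊂ ℝⁿ be measurable sets with B₀ a ball, and for κ ∈ (0,1] set E^κ = E ∩ κB₀ and F^κ = F ∩ κB₀. Assume for some δ ∈ (0,1), d ≥ 1, and 0 < r₁ < r₂ ≤ 1 that (i) |E^{r₁}| ≤ (δ/5ⁿ)·((r₂−r₁)/d)ⁿ·|B₀|, and (ii) for every ball B with dB ⊂ B₀, if |E ∩ B| > (δ/5ⁿ)|B| then B ⊂ F. Then |E^{r₁}| ≤ δ·|F^{r₂}|. -/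
open Set MeasureTheory Metric

lemma ks_vol_scale (n : ℕ) (y z : EuclideanSpace ℝ (Fin n)) (c r : ℝ) (hc : 0 < c) :
    (volume (ball y (c * r))).toReal = c ^ n * (volume (ball z r)).toReal := by
  rw [Measure.addHaar_ball_mul_of_pos volume y hc r, Measure.addHaar_ball_center volume z r,
    ENNReal.toReal_mul, ENNReal.toReal_ofReal (by positivity), finrank_euclideanSpace_fin]

lemma ks_cb_ball (n : ℕ) (y : EuclideanSpace ℝ (Fin n)) (r : ℝ) (hr : 0 < r) :
    volume (closedBall y r) = volume (ball y r) := by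
  rw [Measure.addHaar_closedBall volume y hr.le, Measure.addHaar_ball_of_pos volume y hr]

lemma ks_E_cb (n : ℕ) (E : Set (EuclideanSpace ℝ (Fin n))) (y : EuclideanSpace ℝ (Fin n))
    (r : ℝ) (hr : 0 < r) : volume (E ∩ closedBall y r) ≤ volume (E ∩ ball y r) := by
  calc volume (E ∩ closedBall y r) ≤ volume ((E ∩ ball y r) ∪ sphere y r) := by
        refine measure_mono fun x hx => ?_
        rcases hx with ⟨hxE, hxc⟩
        rw [← ball_union_sphere] at hxc
        rcases hxc with h | h
        · exact Or.inl ⟨hxE, h⟩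
        · exact Or.inr h
    _ ≤ volume (E ∩ ball y r) + volume (sphere y r) := measure_union_le _ _
    _ = volume (E ∩ ball y r) := by
        rw [Measure.addHaar_sphere_of_ne_zero volume y hr.ne', add_zero]

theorem krylov_safonov_density (n : ℕ) (x₀ : EuclideanSpace ℝ (Fin n)) (R : ℝ) (hR : 0 < R)
    (E F : Set (EuclideanSpace ℝ (Fin n))) (hE : MeasurableSet E) (hF : MeasurableSet F)
    (hEsub : E ⊆ ball x₀ R) (hFsub : F ⊆ ball x₀ R)
    (delta d r₁ r₂ : ℝ) (hdelta : delta ∈ Ioo (0:ℝ) 1) (hd : 1 ≤ d)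
    (hr₁ : 0 < r₁) (hr12 : r₁ < r₂) (hr₂ : r₂ ≤ 1)
    (hsmall : (volume (E ∩ ball x₀ (r₁ * R))).toReal ≤
      delta / 5 ^ n * ((r₂ - r₁) / d) ^ n * (volume (ball x₀ R)).toReal)
    (hdens : ∀ (y : EuclideanSpace ℝ (Fin n)) (r : ℝ), 0 < r → ball y (d * r) ⊆ ball x₀ R →
      delta / 5 ^ n * (volume (ball y r)).toReal < (volume (E ∩ ball y r)).toReal →
      ball y r ⊆ F) :
    (volume (E ∩ ball x₀ (r₁ * R))).toReal ≤
      delta * (volume (F ∩ ball x₀ (r₂ * R))).toReal := by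
  obtain ⟨hδ0, hδ1⟩ := hdelta
  have hd0 : (0:ℝ) < d := lt_of_lt_of_le one_pos hd
  set ρ : ℝ := (r₂ - r₁) * R / d with hρdef
  have h21 : (0:ℝ) < r₂ - r₁ := by linarith
  have hρpos : 0 < ρ := div_pos (mul_pos h21 hR) hd0
  have hρle : ρ ≤ (r₂ - r₁) * R := by
    rw [hρdef]
    exact div_le_self (by nlinarith) hd
  have hFfin : volume (F ∩ ball x₀ (r₂ * R)) ≠ ⊤ :=
    ((measure_mono inter_subset_right).trans_lt measure_ball_lt_top).ne
  -- inclusion helpers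
  have hdsub : ∀ y ∈ ball x₀ (r₁ * R), ∀ r : ℝ, r ≤ ρ → ball y (d * r) ⊆ ball x₀ R := by
    intro y hy r hrρ
    apply ball_subset_ball'
    have h1 : dist y x₀ < r₁ * R := mem_ball.1 hy
    have h2 : d * r ≤ d * ρ := mul_le_mul_of_nonneg_left hrρ hd0.le
    have h3 : d * ρ = (r₂ - r₁) * R := by
      rw [hρdef]; field_simp
    nlinarith [mul_le_of_le_one_left hR.le hr₂]
  have hr2sub : ∀ y ∈ ball x₀ (r₁ * R), ∀ r : ℝ, r ≤ ρ → ball y r ⊆ ball x₀ (r₂ * R) := by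
    intro y hy r hrρ
    apply ball_subset_ball'
    have h1 : dist y x₀ < r₁ * R := mem_ball.1 hy
    nlinarith
  by_cases hA : ∃ y ∈ ball x₀ (r₁ * R), ∃ r : ℝ, ρ / 5 < r ∧ r ≤ ρ ∧
      delta / 5 ^ n * (volume (ball y r)).toReal < (volume (E ∩ ball y r)).toReal
  · -- Case A
    obtain ⟨y, hy, r, hr5, hrρ, hdr⟩ := hA
    have hrho5 : (0:ℝ) < ρ / 5 := by positivity
    have hrpos : 0 < r := lt_trans hrho5 hr5
    have hsubF : ball y r ⊆ F := hdens y r hrpos (hdsub y hy r hrρ) hdr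
    have hsub2 : ball y r ⊆ ball x₀ (r₂ * R) := hr2sub y hy r hrρ
    have e1 : (volume (ball y ρ)).toReal = ((r₂ - r₁) / d) ^ n * (volume (ball x₀ R)).toReal := by
      rw [show ρ = ((r₂ - r₁) / d) * R by rw [hρdef]; ring]
      exact ks_vol_scale n y x₀ _ R (by positivity)
    have e2 : (volume (ball y ρ)).toReal = 5 ^ n * (volume (ball y (ρ / 5))).toReal := by
      rw [show ρ = 5 * (ρ / 5) by ring]
      rw [show 5 * (ρ/5) / 5 = ρ/5 by ring]
      exact ks_vol_scale n y y 5 (ρ/5) (by norm_num)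
    have h5n : (0:ℝ) < 5 ^ n := by positivity
    calc (volume (E ∩ ball x₀ (r₁ * R))).toReal
        ≤ delta / 5 ^ n * ((r₂ - r₁) / d) ^ n * (volume (ball x₀ R)).toReal := hsmall
      _ = delta / 5 ^ n * (volume (ball y ρ)).toReal := by rw [e1]; ring
      _ = delta * (volume (ball y (ρ / 5))).toReal := by rw [e2]; field_simp
      _ ≤ delta * (volume (ball y r)).toReal := by
          refine mul_le_mul_of_nonneg_left ?_ hδ0.le
          exact ENNReal.toReal_mono measure_ball_lt_top.ne
            (measure_mono (ball_subset_ball hr5.le))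
      _ ≤ delta * (volume (F ∩ ball x₀ (r₂ * R))).toReal := by
          refine mul_le_mul_of_nonneg_left ?_ hδ0.le
          exact ENNReal.toReal_mono hFfin
            (measure_mono (subset_inter hsubF hsub2))
  · -- Case B
    push_neg at hA
    set A : Set (EuclideanSpace ℝ (Fin n)) := E ∩ ball x₀ (r₁ * R) with hAdef
    set T : Set (EuclideanSpace ℝ (Fin n)) := {x | Filter.Tendsto
        (fun r => volume (E ∩ closedBall x r) / volume (closedBall x r))
        (nhdsWithin 0 (Ioi 0)) (nhds 1)} with hTdef
    set G : Set (EuclideanSpace ℝ (Fin n)) := A ∩ T with hGdef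
    have hae : ∀ᵐ x ∂(volume : Measure (EuclideanSpace ℝ (Fin n))), x ∈ E → x ∈ T := by
      have := Besicovitch.ae_tendsto_measure_inter_div
        (volume : Measure (EuclideanSpace ℝ (Fin n))) E
      rwa [ae_restrict_iff' hE] at this
    have hnull : volume (A \ G) = 0 := by
      refine measure_mono_null ?_ (ae_iff.1 hae)
      intro x hx
      simp only [mem_setOf_eq]
      exact fun h => hx.2 ⟨hx.1, h hx.1.1⟩
    have hAG : volume A ≤ volume G := by
      calc volume A ≤ volume (G ∪ (A \ G)) := by
            refine measure_mono fun x hx => ?_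
            by_cases h : x ∈ G
            · exact Or.inl h
            · exact Or.inr ⟨hx, h⟩
        _ ≤ volume G + volume (A \ G) := measure_union_le _ _
        _ = volume G := by rw [hnull, add_zero]
    -- key choice of radii
    have key : ∀ y ∈ G, ∃ r : ℝ, 0 < r ∧ r ≤ ρ / 5 ∧ ball y r ⊆ F ∧
        ball y r ⊆ ball x₀ (r₂ * R) ∧
        volume (E ∩ closedBall y (5 * r)) ≤ ENNReal.ofReal delta * volume (ball y r) := by
      intro y hy
      obtain ⟨⟨hyE, hyB⟩, hyT⟩ := hy
      set S : Set ℝ := {r | 0 < r ∧ r ≤ ρ ∧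
        delta / 5 ^ n * (volume (ball y r)).toReal < (volume (E ∩ ball y r)).toReal} with hSdef
      have hδ5 : delta / 5 ^ n ≤ delta :=
        div_le_self hδ0.le (one_le_pow₀ (by norm_num : (1:ℝ) ≤ 5))
      have hc1 : ENNReal.ofReal (delta / 5 ^ n) < 1 := by
        rw [ENNReal.ofReal_lt_one]; linarith
      have hev := hyT.eventually_const_lt hc1
      have hev2 : ∀ᶠ r in nhdsWithin (0:ℝ) (Ioi 0), 0 < r ∧ r < ρ / 5 := by
        filter_upwards [Ioo_mem_nhdsGT_of_mem
          (⟨le_refl (0:ℝ), by positivity⟩ : (0:ℝ) ∈ Ico (0:ℝ) (ρ/5))] with r hr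
        exact ⟨hr.1, hr.2⟩
      obtain ⟨r₀, hr₀gt, hr₀pos, hr₀lt⟩ := (hev.and hev2).exists
      have hr₀S : r₀ ∈ S := by
        refine ⟨hr₀pos, by linarith, ?_⟩
        have hmul : ENNReal.ofReal (delta / 5 ^ n) * volume (closedBall y r₀) <
            volume (E ∩ closedBall y r₀) := ENNReal.mul_lt_of_lt_div hr₀gt
        rw [ks_cb_ball n y r₀ hr₀pos] at hmul
        have hlt : ENNReal.ofReal (delta / 5 ^ n) * volume (ball y r₀) <
            volume (E ∩ ball y r₀) := lt_of_lt_of_le hmul (ks_E_cb n E y r₀ hr₀pos)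
        have hfin : volume (E ∩ ball y r₀) ≠ ⊤ :=
          ((measure_mono inter_subset_right).trans_lt measure_ball_lt_top).ne
        have := ENNReal.toReal_strict_mono hfin hlt
        rwa [ENNReal.toReal_mul, ENNReal.toReal_ofReal (by positivity)] at this
      have hSne : S.Nonempty := ⟨r₀, hr₀S⟩
      have hSbdd : BddAbove S := ⟨ρ, fun t ht => ht.2.1⟩
      set s := sSup S with hsdef
      have hs_pos : 0 < s := lt_of_lt_of_le hr₀pos (le_csSup hSbdd hr₀S)
      have hsρ5 : s ≤ ρ / 5 := by
        by_contra h
        push_neg at h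
        obtain ⟨t, htS, htgt⟩ := exists_lt_of_lt_csSup hSne h
        exact absurd htS.2.2 (not_lt.2 (hA y hyB t htgt htS.2.1))
      obtain ⟨r, hrS, hrgt⟩ := exists_lt_of_lt_csSup hSne (half_lt_self hs_pos)
      have hrle : r ≤ s := le_csSup hSbdd hrS
      have hrpos : 0 < r := hrS.1
      have h5r_not : 5 * r ∉ S := fun h => absurd (le_csSup hSbdd h) (by push_neg; linarith)
      have h5rρ : 5 * r ≤ ρ := by linarith
      have h5rpos : 0 < 5 * r := by linarith
      have hnd : (volume (E ∩ ball y (5 * r))).toReal ≤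
          delta / 5 ^ n * (volume (ball y (5 * r))).toReal := by
        by_contra hcon
        push_neg at hcon
        exact h5r_not ⟨h5rpos, h5rρ, hcon⟩
      have hscale : (volume (ball y (5 * r))).toReal = 5 ^ n * (volume (ball y r)).toReal :=
        ks_vol_scale n y y 5 r (by norm_num)
      have h5n : (0:ℝ) < 5 ^ n := by positivity
      have hnd' : (volume (E ∩ ball y (5 * r))).toReal ≤
          delta * (volume (ball y r)).toReal := by
        rw [hscale] at hnd
        calc (volume (E ∩ ball y (5 * r))).toReal
            ≤ delta / 5 ^ n * (5 ^ n * (volume (ball y r)).toReal) := hnd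
          _ = delta * (volume (ball y r)).toReal := by field_simp
      refine ⟨r, hrpos, by linarith, hdens y r hrpos (hdsub y hyB r (by linarith)) hrS.2.2,
        hr2sub y hyB r (by linarith), ?_⟩
      calc volume (E ∩ closedBall y (5 * r)) ≤ volume (E ∩ ball y (5 * r)) :=
            ks_E_cb n E y (5 * r) h5rpos
        _ ≤ ENNReal.ofReal delta * volume (ball y r) := by
            have hfin : volume (E ∩ ball y (5 * r)) ≠ ⊤ :=
              ((measure_mono inter_subset_right).trans_lt measure_ball_lt_top).ne
            have hbfin : volume (ball y r) ≠ ⊤ := measure_ball_lt_top.ne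
            rw [← ENNReal.ofReal_toReal hfin, ← ENNReal.ofReal_toReal hbfin,
              ← ENNReal.ofReal_mul hδ0.le]
            exact ENNReal.ofReal_le_ofReal hnd'
    choose! rad h1 h2 h3 h4 h5 using key
    obtain ⟨u, huG, hdisj, hcover⟩ :=
      Vitali.exists_disjoint_subfamily_covering_enlargement_closedBall G id rad (ρ / 5)
        (fun a ha => h2 a ha) 5 (by norm_num)
    have ucount : u.Countable := by
      refine hdisj.countable_of_nonempty_interior fun b hb => ?_
      exact ⟨b, ball_subset_interior_closedBall (mem_ball_self (h1 b (huG hb)))⟩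
    have hGsub : G ⊆ ⋃ b ∈ u, E ∩ closedBall b (5 * rad b) := by
      intro a ha
      obtain ⟨b, hb, hsub⟩ := hcover a ha
      exact mem_biUnion hb ⟨ha.1.1, hsub (mem_closedBall_self (h1 a ha).le)⟩
    have hdisjballs : u.PairwiseDisjoint fun b => ball b (rad b) :=
      hdisj.mono fun b => ball_subset_closedBall
    have main : volume A ≤ ENNReal.ofReal delta * volume (F ∩ ball x₀ (r₂ * R)) := by
      calc volume A ≤ volume G := hAG
        _ ≤ volume (⋃ b ∈ u, E ∩ closedBall b (5 * rad b)) := measure_mono hGsub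
        _ ≤ ∑' b : u, volume (E ∩ closedBall (b : EuclideanSpace ℝ (Fin n)) (5 * rad b)) :=
            measure_biUnion_le volume ucount _
        _ ≤ ∑' b : u, ENNReal.ofReal delta * volume (ball (b : EuclideanSpace ℝ (Fin n)) (rad b)) :=
            ENNReal.tsum_le_tsum fun b => h5 b (huG b.2)
        _ = ENNReal.ofReal delta * ∑' b : u, volume (ball (b : EuclideanSpace ℝ (Fin n)) (rad b)) :=
            ENNReal.tsum_mul_left
        _ = ENNReal.ofReal delta * volume (⋃ b ∈ u, ball b (rad b)) := by
            rw [measure_biUnion ucount hdisjballs fun b _ => measurableSet_ball]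
        _ ≤ ENNReal.ofReal delta * volume (F ∩ ball x₀ (r₂ * R)) := by
            refine mul_le_mul_right (measure_mono ?_) _
            exact iUnion₂_subset fun b hb =>
              subset_inter (h3 b (huG hb)) (h4 b (huG hb))
    have hRfin : ENNReal.ofReal delta * volume (F ∩ ball x₀ (r₂ * R)) ≠ ⊤ :=
      ENNReal.mul_ne_top ENNReal.ofReal_ne_top hFfin
    have := ENNReal.toReal_mono hRfin main
    rwa [ENNReal.toReal_mul, ENNReal.toReal_ofReal hδ0.le] at this
end

section
/- Let m : ℝ → ℝ be odd with m(σ) = m̃(|σ|)·sgn(σ) where m̃ : [0,∞)→[0,∞) is convex, increasing, m̃(0)=0, and doubling with constant c. Then there exists a constant c' > 0 depending only on c such that for all u, v ∈ ℝ: (m(u) − m(v))·sgn(u − v) ≥ c'·m̃(|u − v|). -/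
/-!
A convex `m̃` with `m̃ 0 = 0` is superadditive, which settles the case where `u` and `v` have the
same sign, with constant `1`. When they have opposite signs, `|u - v| ≤ 2 max |u| |v|`, so
monotonicity and doubling give `m̃ |u - v| ≤ c (m̃ |u| + m̃ |v|) = c |m u - m v|`. Hence `c' = c⁻¹`.
-/

open Set

section Convex

variable {𝕜 : Type*} [Field 𝕜] [LinearOrder 𝕜] [IsStrictOrderedRing 𝕜]

theorem ConvexOn.map_smul_le_of_map_zero {E β : Type*} [AddCommGroup E] [Module 𝕜 E]
    [AddCommMonoid β] [PartialOrder β] [Module 𝕜 β] {s : Set E} {f : E → β}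
    (hf : ConvexOn 𝕜 s f) (h0 : f 0 = 0) (hs : (0 : E) ∈ s) {x : E} (hx : x ∈ s) {t : 𝕜}
    (ht₀ : 0 ≤ t) (ht₁ : t ≤ 1) : f (t • x) ≤ t • f x := by
  simpa [h0] using hf.2 hs hx (sub_nonneg.2 ht₁) ht₀ (sub_add_cancel 1 t)

variable {f : 𝕜 → 𝕜}

theorem ConvexOn.add_le_map_add_of_map_zero (hf : ConvexOn 𝕜 (Ici 0) f) (h0 : f 0 = 0)
    {a b : 𝕜} (ha : 0 ≤ a) (hb : 0 ≤ b) : f a + f b ≤ f (a + b) := by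
  rcases (add_nonneg ha hb).eq_or_lt with hab | hab
  · obtain ⟨rfl, rfl⟩ : a = 0 ∧ b = 0 := ⟨by linarith, by linarith⟩
    simp [h0]
  have le_div_mul {x : 𝕜} (hx : 0 ≤ x) (hxs : x ≤ a + b) : f x ≤ x / (a + b) * f (a + b) := by
    simpa [div_mul_cancel₀ x hab.ne'] using
      hf.map_smul_le_of_map_zero h0 self_mem_Ici (mem_Ici.2 hab.le) (div_nonneg hx hab.le)
        ((div_le_one hab).2 hxs)
  calc f a + f b ≤ a / (a + b) * f (a + b) + b / (a + b) * f (a + b) :=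
        add_le_add (le_div_mul ha (by linarith)) (le_div_mul hb (by linarith))
    _ = f (a + b) := by field_simp

theorem ConvexOn.map_sub_le_sub_of_map_zero (hf : ConvexOn 𝕜 (Ici 0) f) (h0 : f 0 = 0)
    {a b : 𝕜} (ha : 0 ≤ a) (hab : a ≤ b) : f (b - a) ≤ f b - f a := by
  have := hf.add_le_map_add_of_map_zero h0 ha (sub_nonneg.2 hab)
  rw [add_sub_cancel] at this
  linarith

theorem map_add_le_mul_add_of_doubling {c : 𝕜} (hc : 0 ≤ c) (hmono : MonotoneOn f (Ici 0))
    (h0 : f 0 = 0) (hdbl : ∀ t ≥ 0, f (2 * t) ≤ c * f t) {a b : 𝕜} (ha : 0 ≤ a) (hb : 0 ≤ b) :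
    f (a + b) ≤ c * (f a + f b) := by
  have hmax : 0 ≤ max a b := le_max_of_le_left ha
  have hnonneg {x : 𝕜} (hx : 0 ≤ x) : 0 ≤ f x := h0 ▸ hmono self_mem_Ici hx hx
  calc f (a + b) ≤ f (2 * max a b) :=
        hmono (mem_Ici.2 (add_nonneg ha hb)) (mem_Ici.2 (by positivity)) (by
          linarith [le_max_left a b, le_max_right a b])
    _ ≤ c * f (max a b) := hdbl _ hmax
    _ = c * max (f a) (f b) := by rw [hmono.map_max ha hb]
    _ ≤ c * (f a + f b) := by
        gcongr; exact max_le_add_of_nonneg (hnonneg ha) (hnonneg hb)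

end Convex

section OddExtension

variable {f m : ℝ → ℝ}

theorem map_abs_mul_sign_of_nonneg (h0 : f 0 = 0) {σ : ℝ} (hσ : 0 ≤ σ) :
    f |σ| * Real.sign σ = f σ := by
  rcases hσ.eq_or_lt with rfl | hσ
  · simp [h0]
  · rw [abs_of_pos hσ, Real.sign_of_pos hσ, mul_one]

theorem map_abs_mul_sign_of_nonpos (h0 : f 0 = 0) {σ : ℝ} (hσ : σ ≤ 0) :
    f |σ| * Real.sign σ = -f (-σ) := by
  rcases hσ.eq_or_lt with rfl | hσ
  · simp [h0]
  · rw [abs_of_neg hσ, Real.sign_of_neg hσ, mul_neg_one]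

theorem map_sub_le_mul_sub_of_doubling {c : ℝ} (hc : 1 ≤ c) (hconv : ConvexOn ℝ (Ici 0) f)
    (hmono : MonotoneOn f (Ici 0)) (h0 : f 0 = 0) (hdbl : ∀ t ≥ 0, f (2 * t) ≤ c * f t)
    (hm : ∀ σ, m σ = f |σ| * Real.sign σ) {u v : ℝ} (hvu : v ≤ u) :
    f (u - v) ≤ c * (m u - m v) := by
  rcases le_or_gt 0 v with hv | hv
  · rw [hm, hm, map_abs_mul_sign_of_nonneg h0 (hv.trans hvu), map_abs_mul_sign_of_nonneg h0 hv]
    exact (hconv.map_sub_le_sub_of_map_zero h0 hv hvu).trans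
      (le_mul_of_one_le_left (sub_nonneg.2 (hmono hv (hv.trans hvu) hvu)) hc)
  rcases le_or_gt u 0 with hu | hu
  · have hu' : 0 ≤ -u := neg_nonneg.2 hu
    have hvu' : -u ≤ -v := neg_le_neg hvu
    rw [hm, hm, map_abs_mul_sign_of_nonpos h0 hu, map_abs_mul_sign_of_nonpos h0 (hvu.trans hu),
      neg_sub_neg, ← neg_sub_neg v u]
    exact (hconv.map_sub_le_sub_of_map_zero h0 hu' hvu').trans
      (le_mul_of_one_le_left (sub_nonneg.2 (hmono hu' (hu'.trans hvu') hvu')) hc)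
  · rw [hm, hm, map_abs_mul_sign_of_nonneg h0 hu.le, map_abs_mul_sign_of_nonpos h0 hv.le,
      sub_neg_eq_add, sub_eq_add_neg]
    exact map_add_le_mul_add_of_doubling (by linarith) hmono h0 hdbl hu.le (by linarith)

end OddExtension

theorem sign_condition_monotonicity (c : ℝ) (hc : 1 ≤ c) :
    ∃ c' : ℝ, 0 < c' ∧
      ∀ (mt m : ℝ → ℝ),
        ConvexOn ℝ (Ici (0:ℝ)) mt → MonotoneOn mt (Ici (0:ℝ)) → mt 0 = 0 →
        (∀ t ≥ 0, mt (2 * t) ≤ c * mt t) →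
        (∀ σ : ℝ, m σ = mt |σ| * Real.sign σ) →
        ∀ u v : ℝ, c' * mt |u - v| ≤ (m u - m v) * Real.sign (u - v) := by
  have hc₀ : 0 < c := zero_lt_one.trans_le hc
  refine ⟨c⁻¹, inv_pos.2 hc₀, fun mt m hconv hmono h0 hdbl hm u v => ?_⟩
  wlog hvu : v ≤ u generalizing u v
  · have := this v u (le_of_not_ge hvu)
    rwa [abs_sub_comm, ← neg_sub u v, Real.sign_neg, ← neg_sub (m u), neg_mul_neg] at this
  rcases hvu.eq_or_lt with rfl | hvu
  · simp [h0]
  rw [abs_of_pos (sub_pos.2 hvu), Real.sign_of_pos (sub_pos.2 hvu), mul_one, inv_mul_le_iff₀ hc₀]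
  exact map_sub_le_mul_sub_of_doubling hc hconv hmono h0 hdbl hm hvu.le
end
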